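/- A numerical semigroup S with multiplicity m is m-irreducible if and only if one of the following holds: (1) S = {0} ∪ {x : x ≥ m}; (2) S = {0} ∪ {x : x ≥ m, x ≠ f} for some f with m+1 ≤ f ≤ 2m−1; (3) S is an irreducible numerical semigroup. -/
import Mathlib


def IsNumericalSemigroup (S : Set ℕ) : Prop :=
  0 ∈ S ∧ (∀ a ∈ S, ∀ b ∈ S, a + b ∈ S) ∧ Sᶜ.Finite

noncomputable def multNS (S : Set ℕ) : ℕ := sInf {x ∈ S | x ≠ 0}

noncomputable def frobNS (S : Set ℕ) : ℕ := sSup Sᶜ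

noncomputable def genusNS (S : Set ℕ) : ℕ := Sᶜ.ncard

/-- `S` is `m`-irreducible: it lies in `𝒮(m)` and is not the intersection of two
elements of `𝒮(m)` properly containing it. -/
def MIrreducibleNS (m : ℕ) (S : Set ℕ) : Prop :=
  IsNumericalSemigroup S ∧ multNS S = m ∧
    ¬∃ S₁ S₂ : Set ℕ, (IsNumericalSemigroup S₁ ∧ multNS S₁ = m) ∧
      (IsNumericalSemigroup S₂ ∧ multNS S₂ = m) ∧ S ⊂ S₁ ∧ S ⊂ S₂ ∧ S = S₁ ∩ S₂

/-- `S` is irreducible: not the intersection of two numerical semigroups properly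
containing it. -/
def IrreducibleNS (S : Set ℕ) : Prop :=
  IsNumericalSemigroup S ∧
    ¬∃ S₁ S₂ : Set ℕ, IsNumericalSemigroup S₁ ∧ IsNumericalSemigroup S₂ ∧
      S ⊂ S₁ ∧ S ⊂ S₂ ∧ S = S₁ ∩ S₂

lemma ns_mult_mem {S : Set ℕ} (hS : IsNumericalSemigroup S) :
    multNS S ∈ S ∧ multNS S ≠ 0 := by
  have hinf : S.Infinite := by
    have h := Set.Finite.infinite_compl (s := Sᶜ) hS.2.2
    simpa using h
  have hne : {x ∈ S | x ≠ 0}.Nonempty := by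
    obtain ⟨x, hx⟩ := (hinf.diff (Set.finite_singleton 0)).nonempty
    exact ⟨x, hx.1, by simpa using hx.2⟩
  have h := Nat.sInf_mem hne
  exact ⟨h.1, h.2⟩

lemma ns_mult_le {S : Set ℕ} (x : ℕ) (hx : x ∈ S) (h0 : x ≠ 0) : multNS S ≤ x :=
  Nat.sInf_le ⟨hx, h0⟩

lemma multNS_eq {T : Set ℕ} (m : ℕ) (hm : m ∈ T) (h0 : m ≠ 0)
    (hlb : ∀ y ∈ T, y ≠ 0 → m ≤ y) : multNS T = m := by
  have hne : {x ∈ T | x ≠ 0}.Nonempty := ⟨m, hm, h0⟩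
  have h1 := Nat.sInf_mem hne
  exact le_antisymm (Nat.sInf_le ⟨hm, h0⟩) (hlb _ h1.1 h1.2)

lemma union_ns {S : Set ℕ} (hS : IsNumericalSemigroup S) (x : ℕ)
    (hcl : ∀ s ∈ S, s ≠ 0 → x + s ∈ S) (hxx : x + x ∈ S ∪ {x}) :
    IsNumericalSemigroup (S ∪ {x}) := by
  refine ⟨Or.inl hS.1, ?_, ?_⟩
  · rintro a (ha | ha) b (hb | hb)
    · exact Or.inl (hS.2.1 a ha b hb)
    · simp only [Set.mem_singleton_iff] at hb; subst hb
      rcases eq_or_ne a 0 with rfl | h0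
      · exact Or.inr (by simp)
      · exact Or.inl (by rw [Nat.add_comm]; exact hcl a ha h0)
    · simp only [Set.mem_singleton_iff] at ha; subst ha
      rcases eq_or_ne b 0 with rfl | h0
      · exact Or.inr (by simp)
      · exact Or.inl (hcl b hb h0)
    · simp only [Set.mem_singleton_iff] at ha hb; subst ha; subst hb; exact hxx
  · exact hS.2.2.subset (Set.compl_subset_compl.mpr Set.subset_union_left)

theorem stmt10 (m : ℕ) (S : Set ℕ) (hS : IsNumericalSemigroup S) (hm : multNS S = m) :
    MIrreducibleNS m S ↔
      (S = {0} ∪ {x : ℕ | m ≤ x} ∨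
       (∃ f : ℕ, m + 1 ≤ f ∧ f ≤ 2 * m - 1 ∧ S = {0} ∪ {x : ℕ | m ≤ x ∧ x ≠ f}) ∨
       IrreducibleNS S) := by
  obtain ⟨hmm, hm0⟩ : m ∈ S ∧ m ≠ 0 := by
    have := ns_mult_mem hS; rwa [hm] at this
  have hml : ∀ x ∈ S, x ≠ 0 → m ≤ x := fun x hx h0 => hm ▸ ns_mult_le x hx h0
  constructor
  · rintro ⟨-, -, hirr⟩
    by_cases hc1 : S = {0} ∪ {x : ℕ | m ≤ x}
    · exact Or.inl hc1
    by_cases hc2 : ∃ f : ℕ, m + 1 ≤ f ∧ f ≤ 2 * m - 1 ∧ S = {0} ∪ {x : ℕ | m ≤ x ∧ x ≠ f}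
    · exact Or.inr (Or.inl hc2)
    by_cases hirr3 : IrreducibleNS S
    · exact Or.inr (Or.inr hirr3)
    exfalso
    -- S has a nonempty complement, else case 1 would hold
    have hcne : Sᶜ.Nonempty := by
      rcases Set.eq_empty_or_nonempty Sᶜ with he | hne
      · exfalso; apply hc1
        have huniv : S = Set.univ := by rwa [Set.compl_empty_iff] at he
        have hm1 : m = 1 := by
          have := hml 1 (huniv ▸ Set.mem_univ 1) one_ne_zero
          omega
        ext x; simp [huniv, hm1]; omega
      · exact hne
    set F := frobNS S with hFdef
    have hFnot : F ∉ S := hcne.csSup_mem hS.2.2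
    have hFgt : ∀ x, F < x → x ∈ S := by
      intro x hx
      by_contra hxS
      have : x ≤ F := le_csSup hS.2.2.bddAbove hxS
      omega
    have hFm : m < F := by
      rcases lt_or_ge m F with h | h
      · exact h
      exfalso; apply hc1
      ext x
      constructor
      · intro hx
        rcases eq_or_ne x 0 with rfl | h0
        · exact Or.inl rfl
        · exact Or.inr (hml x hx h0)
      · rintro (hx | hx)
        · simp only [Set.mem_singleton_iff] at hx; subst hx; exact hS.1
        · simp only [Set.mem_setOf_eq] at hx
          rcases lt_or_ge F x with h' | h'
          · exact hFgt x h'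
          · exfalso; apply hFnot
            have hxF : F = m := by omega
            rw [hxF]; exact hmm
    -- get a decomposition witnessing non-irreducibility
    obtain ⟨S₁, S₂, hn1, hn2, hss1, hss2, heq⟩ :
        ∃ S₁ S₂ : Set ℕ, IsNumericalSemigroup S₁ ∧ IsNumericalSemigroup S₂ ∧
          S ⊂ S₁ ∧ S ⊂ S₂ ∧ S = S₁ ∩ S₂ := by
      by_contra hno; exact hirr3 ⟨hS, hno⟩
    set C := {x : ℕ | x ∉ S ∧ F - x ∉ S ∧ 2 * x ≠ F} with hCdef
    have hgetC : ∀ T : Set ℕ, IsNumericalSemigroup T → S ⊆ T → F ∉ T →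
        ∀ x ∈ T, x ∉ S → x ∈ C := by
      intro T hT hST hFT x hxT hxS
      have hxF : x < F := by
        rcases lt_or_ge F x with h | h
        · exact absurd (hFgt x h) hxS
        · rcases eq_or_lt_of_le h with rfl | h'
          · exact absurd hxT hFT
          · exact h'
      refine ⟨hxS, ?_, ?_⟩
      · intro hFx
        have hmem : x + (F - x) ∈ T := hT.2.1 x hxT _ (hST hFx)
        rw [Nat.add_sub_cancel' hxF.le] at hmem
        exact hFT hmem
      · intro h2x
        have hmem : x + x ∈ T := hT.2.1 x hxT x hxT
        have : F ∈ T := by rwa [show x + x = F by omega] at hmem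
        exact hFT this
    have hCne : C.Nonempty := by
      have hFnotboth : F ∉ S₁ ∨ F ∉ S₂ := by
        by_contra hcc; push_neg at hcc
        exact hFnot (heq ▸ (⟨hcc.1, hcc.2⟩ : F ∈ S₁ ∩ S₂))
      rcases hFnotboth with hF1 | hF2
      · obtain ⟨x, hx1, hx2⟩ := Set.exists_of_ssubset hss1
        exact ⟨x, hgetC S₁ hn1 hss1.1 hF1 x hx1 hx2⟩
      · obtain ⟨x, hx1, hx2⟩ := Set.exists_of_ssubset hss2
        exact ⟨x, hgetC S₂ hn2 hss2.1 hF2 x hx1 hx2⟩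
    have hCfin : C.Finite := hS.2.2.subset (fun x hx => hx.1)
    set h := sSup C with hhdef
    have hhC : h ∈ C := hCne.csSup_mem hCfin
    have hmax : ∀ x ∈ C, x ≤ h := fun x hx => le_csSup hCfin.bddAbove hx
    have hh0 : h ≠ 0 := fun e => hhC.1 (e ▸ hS.1)
    have hhF : h < F := by
      rcases lt_or_ge h F with h' | h'
      · exact h'
      · exfalso
        have hz : F - h = 0 := by omega
        exact hhC.2.1 (hz ▸ hS.1)
    have h2hF : 2 * h ≠ F := hhC.2.2
    have hFh : F < 2 * h := by
      have hin : F - h ∈ C := by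
        refine ⟨hhC.2.1, ?_, by omega⟩
        rw [Nat.sub_sub_self hhF.le]; exact hhC.1
      have := hmax _ hin
      omega
    have hclh : ∀ s ∈ S, s ≠ 0 → h + s ∈ S := by
      intro s hs hs0
      by_contra hz
      have hzF : h + s ≤ F := by
        by_contra h'; push_neg at h'; exact hz (hFgt _ h')
      have hzFne : h + s ≠ F := by
        intro e
        apply hhC.2.1
        have hfe : F - h = s := by omega
        rw [hfe]; exact hs
      have hzC : h + s ∈ C := by
        refine ⟨hz, ?_, by omega⟩
        intro hFz
        apply hhC.2.1
        have hfe : F - h = (F - (h + s)) + s := by omega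
        rw [hfe]; exact hS.2.1 _ hFz _ hs
      have := hmax _ hzC
      omega
    have hnsh : IsNumericalSemigroup (S ∪ {h}) :=
      union_ns hS h hclh (Or.inl (hFgt _ (by omega)))
    have hF0 : F ≠ 0 := fun e => hFnot (e ▸ hS.1)
    have hnsF : IsNumericalSemigroup (S ∪ {F}) :=
      union_ns hS F (fun s hs hs0 => hFgt _ (by omega)) (Or.inl (hFgt _ (by omega)))
    have hmultF : multNS (S ∪ {F}) = m := by
      refine multNS_eq m (Or.inl hmm) hm0 ?_
      rintro y (hy | hy) h0
      · exact hml y hy h0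
      · simp only [Set.mem_singleton_iff] at hy; omega
    have hssF : S ⊂ S ∪ {F} :=
      ⟨Set.subset_union_left, fun hsub => hFnot (hsub (Or.inr rfl))⟩
    rcases le_or_gt m h with hmh | hhm
    · -- h ≥ m : use S ∪ {h} and S ∪ {F}
      apply hirr
      refine ⟨S ∪ {h}, S ∪ {F}, ⟨hnsh, ?_⟩, ⟨hnsF, hmultF⟩,
        ⟨Set.subset_union_left, fun hsub => hhC.1 (hsub (Or.inr rfl))⟩, hssF, ?_⟩
      · refine multNS_eq m (Or.inl hmm) hm0 ?_
        rintro y (hy | hy) h0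
        · exact hml y hy h0
        · simp only [Set.mem_singleton_iff] at hy; omega
      · ext x
        simp only [Set.mem_inter_iff, Set.mem_union, Set.mem_singleton_iff]
        constructor
        · intro hx; exact ⟨Or.inl hx, Or.inl hx⟩
        · rintro ⟨hx1 | hx1, hx2 | hx2⟩
          · exact hx1
          · exact hx1
          · exact hx2
          · omega
    · -- h < m
      have hsubset : S ⊆ {0} ∪ {x : ℕ | m ≤ x ∧ x ≠ F} := by
        intro x hx
        rcases eq_or_ne x 0 with rfl | h0
        · exact Or.inl rfl
        · exact Or.inr ⟨hml x hx h0, fun e => hFnot (e ▸ hx)⟩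
      obtain ⟨g, hg1, hg2⟩ : ∃ g, g ∈ ({0} ∪ {x : ℕ | m ≤ x ∧ x ≠ F} : Set ℕ) ∧ g ∉ S := by
        by_contra hno; push_neg at hno
        exact hc2 ⟨F, by omega, by omega, hsubset.antisymm hno⟩
      have hg0 : g ≠ 0 := fun e => hg2 (e ▸ hS.1)
      have hgm' : m ≤ g ∧ g ≠ F := by
        rcases hg1 with hg | hg
        · simp only [Set.mem_singleton_iff] at hg; exact absurd hg hg0
        · exact hg
      have hgm : m < g := by
        rcases eq_or_lt_of_le hgm'.1 with rfl | h'
        · exact absurd hmm hg2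
        · exact h'
      have hgF : g < F := by
        rcases lt_or_ge F g with h' | h'
        · exact absurd (hFgt g h') hg2
        · have := hgm'.2; omega
      have hnsg : IsNumericalSemigroup (S ∪ {g}) := by
        refine union_ns hS g (fun s hs hs0 => hFgt _ ?_) (Or.inl (hFgt _ (by omega)))
        have := hml s hs hs0; omega
      apply hirr
      refine ⟨S ∪ {F}, S ∪ {g}, ⟨hnsF, hmultF⟩, ⟨hnsg, ?_⟩, hssF,
        ⟨Set.subset_union_left, fun hsub => hg2 (hsub (Or.inr rfl))⟩, ?_⟩
      · refine multNS_eq m (Or.inl hmm) hm0 ?_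
        rintro y (hy | hy) h0
        · exact hml y hy h0
        · simp only [Set.mem_singleton_iff] at hy; omega
      · ext x
        simp only [Set.mem_inter_iff, Set.mem_union, Set.mem_singleton_iff]
        constructor
        · intro hx; exact ⟨Or.inl hx, Or.inl hx⟩
        · rintro ⟨hx1 | hx1, hx2 | hx2⟩
          · exact hx1
          · exact hx1
          · exact hx2
          · omega
  · rintro (h1 | ⟨f, hf1, hf2, h2⟩ | h3)
    · refine ⟨hS, hm, ?_⟩
      rintro ⟨S₁, S₂, ⟨hn1, hm1⟩, -, hss1, -, -⟩
      apply hss1.2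
      intro x hx
      rcases eq_or_ne x 0 with rfl | h0
      · rw [h1]; exact Or.inl rfl
      · rw [h1]; exact Or.inr (hm1 ▸ ns_mult_le x hx h0)
    · refine ⟨hS, hm, ?_⟩
      rintro ⟨S₁, S₂, ⟨hn1, hm1⟩, ⟨hn2, hm2⟩, hss1, hss2, heq⟩
      have hfS : f ∉ S := by
        rw [h2]
        rintro (hf | hf)
        · simp only [Set.mem_singleton_iff] at hf; omega
        · exact hf.2 rfl
      have key : ∀ T : Set ℕ, multNS T = m → S ⊂ T → f ∈ T := by
        intro T hmT hssT
        obtain ⟨x, hxT, hxS⟩ := Set.exists_of_ssubset hssT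
        have hx0 : x ≠ 0 := fun e => hxS (e ▸ hS.1)
        have hxm : m ≤ x := hmT ▸ ns_mult_le x hxT hx0
        have hxf : x = f := by
          by_contra hne
          exact hxS (h2 ▸ Or.inr ⟨hxm, hne⟩)
        exact hxf ▸ hxT
      exact hfS (heq ▸ (⟨key S₁ hm1 hss1, key S₂ hm2 hss2⟩ : f ∈ S₁ ∩ S₂))
    · refine ⟨hS, hm, ?_⟩
      rintro ⟨S₁, S₂, ⟨hn1, -⟩, ⟨hn2, -⟩, hss1, hss2, heq⟩
      exact h3.2 ⟨S₁, S₂, hn1, hn2, hss1, hss2, heq⟩
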